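/- arXiv:1108.0027 — 2 statements merged into one kernel-verified Lean document; each statement's English description precedes it below -/
import Mathlib

section
/- For the Pareto-Lognormal distribution, F(x)/x^β → c as x → 0⁺ for a positive constant c = e^{−βμ+β²τ²/2}; that is, near zero the PLN CDF behaves like a Pareto (power) law with exponent β. -/
open MeasureTheory Filter

noncomputable def Phi (x : ℝ) : ℝ :=
  ∫ t in Set.Iic x, (Real.sqrt (2 * Real.pi))⁻¹ * Real.exp (-t ^ 2 / 2)

noncomputable def PhiC (x : ℝ) : ℝ := 1 - Phi x

noncomputable def erf (x : ℝ) : ℝ :=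
  (2 / Real.sqrt Real.pi) * ∫ t in (0:ℝ)..x, Real.exp (-t ^ 2)

noncomputable def erfc (x : ℝ) : ℝ := 1 - erf x


noncomputable def plnPDF (β μ τ x : ℝ) : ℝ :=
  β * x ^ (β - 1) * Real.exp (-β * μ + β ^ 2 * τ ^ 2 / 2) *
    PhiC ((Real.log x - μ + β * τ ^ 2) / τ)

noncomputable def plnCDF (β μ τ x : ℝ) : ℝ :=
  Phi ((Real.log x - μ) / τ) + x ^ β * Real.exp (-β * μ + β ^ 2 * τ ^ 2 / 2) *
    PhiC ((Real.log x - μ + β * τ ^ 2) / τ)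

/-!
On `(-∞, y]` with `y ≤ -2a` the Gaussian exponent satisfies `-t²/2 ≤ a t`, so `Φ(y) ≤ C e^{a y}`:
the normal CDF decays at `-∞` faster than every exponential. Writing `u = (log x - μ)/τ`, the first
term of `F(x)/x^β` is `e^{-βμ} Φ(u) e^{-βτ u}`, which therefore tends to `0` as `x → 0⁺`, while the
second is `e^{-βμ+β²τ²/2} Φᶜ(u + βτ)`, which tends to `e^{-βμ+β²τ²/2}`.
-/

open Set Real Asymptotics Topology

lemma Phi_nonneg (y : ℝ) : 0 ≤ Phi y :=
  setIntegral_nonneg measurableSet_Iic fun _ _ => by positivity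

lemma Phi_le_exp_mul {a y : ℝ} (ha : 0 < a) (hy : y ≤ -(2 * a)) :
    Phi y ≤ (√(2 * π))⁻¹ * (exp (a * y) / a) := by
  have hbound : ∀ t ∈ Iic y,
      (√(2 * π))⁻¹ * exp (-t ^ 2 / 2) ≤ (√(2 * π))⁻¹ * exp (a * t) := by
    intro t ht
    have ht : t ≤ -(2 * a) := le_trans ht hy
    gcongr
    nlinarith
  calc Phi y ≤ ∫ t in Iic y, (√(2 * π))⁻¹ * exp (a * t) :=
        integral_mono_of_nonneg (.of_forall fun _ => by positivity)
          ((integrableOn_exp_mul_Iic ha y).const_mul _)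
          ((ae_restrict_iff' measurableSet_Iic).2 (.of_forall hbound))
    _ = (√(2 * π))⁻¹ * (exp (a * y) / a) := by
        rw [integral_const_mul, integral_exp_mul_Iic ha]

lemma Phi_isBigO_exp_mul_atBot {a : ℝ} (ha : 0 < a) :
    Phi =O[atBot] fun y => exp (a * y) := by
  refine IsBigO.of_bound ((√(2 * π))⁻¹ / a) ?_
  filter_upwards [eventually_le_atBot (-(2 * a))] with y hy
  rw [norm_of_nonneg (Phi_nonneg y), norm_of_nonneg (exp_pos _).le]
  calc Phi y ≤ (√(2 * π))⁻¹ * (exp (a * y) / a) := Phi_le_exp_mul ha hy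
    _ = (√(2 * π))⁻¹ / a * exp (a * y) := by ring

lemma Phi_isLittleO_exp_mul_atBot (k : ℝ) :
    Phi =o[atBot] fun y => exp (k * y) := by
  have ha : 0 < |k| + 1 := by positivity
  refine (Phi_isBigO_exp_mul_atBot ha).trans_isLittleO (isLittleO_exp_comp_exp_comp.2 ?_)
  have hk : k - (|k| + 1) < 0 := by linarith [le_abs_self k]
  simpa only [← sub_mul, id] using tendsto_id.const_mul_atBot_of_neg hk

lemma tendsto_Phi_atBot : Tendsto Phi atBot (𝓝 0) := by
  simpa using (Phi_isLittleO_exp_mul_atBot 0).tendsto_div_nhds_zero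

lemma tendsto_PhiC_atBot : Tendsto PhiC atBot (𝓝 1) := by
  have h := tendsto_Phi_atBot.const_sub 1
  rw [sub_zero] at h
  exact h

lemma tendsto_log_add_div_nhdsGT_zero (c : ℝ) {τ : ℝ} (hτ : 0 < τ) :
    Tendsto (fun x => (log x + c) / τ) (𝓝[>] 0) atBot :=
  (tendsto_atBot_add_const_right _ c tendsto_log_nhdsGT_zero).atBot_div_const hτ

lemma Phi_log_div_rpow {β μ τ x : ℝ} (hτ : 0 < τ) (hx : 0 < x) :
    Phi ((log x - μ) / τ) / x ^ β =
      Phi ((log x - μ) / τ) / exp (β * τ * ((log x - μ) / τ)) / exp (β * μ) := by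
  rw [div_div, ← exp_add, rpow_def_of_pos hx]
  congr 2
  field_simp
  ring

theorem plnCDF_pareto_near_zero_general (β μ τ : ℝ) (hτ : 0 < τ) :
    Tendsto (fun x : ℝ => plnCDF β μ τ x / x ^ β) (nhdsWithin 0 (Set.Ioi 0))
        (nhds (Real.exp (-β * μ + β ^ 2 * τ ^ 2 / 2))) ∧
    0 < Real.exp (-β * μ + β ^ 2 * τ ^ 2 / 2) := by
  refine ⟨?_, exp_pos _⟩
  set c := exp (-β * μ + β ^ 2 * τ ^ 2 / 2)
  have hu := tendsto_log_add_div_nhdsGT_zero (-μ) hτ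
  have hv := tendsto_log_add_div_nhdsGT_zero (-μ + β * τ ^ 2) hτ
  simp only [← sub_eq_add_neg, ← add_assoc] at hu hv
  have hfirst : Tendsto (fun x => Phi ((log x - μ) / τ) / x ^ β) (𝓝[>] 0) (𝓝 0) := by
    have h := ((Phi_isLittleO_exp_mul_atBot (β * τ)).tendsto_div_nhds_zero.comp hu).div_const
      (exp (β * μ))
    rw [zero_div] at h
    refine h.congr' ?_
    filter_upwards [self_mem_nhdsWithin] with x hx
    exact (Phi_log_div_rpow hτ hx).symm
  have hsecond := (tendsto_PhiC_atBot.comp hv).const_mul c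
  rw [mul_one] at hsecond
  refine (zero_add c ▸ hfirst.add hsecond).congr' ?_
  filter_upwards [self_mem_nhdsWithin] with x hx
  have hxβ : x ^ β ≠ 0 := (rpow_pos_of_pos hx β).ne'
  simp only [Function.comp_apply, plnCDF, c]
  field_simp

theorem plnCDF_pareto_near_zero (β μ τ : ℝ) (hβ : 0 < β) (hτ : 0 < τ) :
    Tendsto (fun x : ℝ => plnCDF β μ τ x / x ^ β) (nhdsWithin 0 (Set.Ioi 0))
        (nhds (Real.exp (-β * μ + β ^ 2 * τ ^ 2 / 2))) ∧
    0 < Real.exp (-β * μ + β ^ 2 * τ ^ 2 / 2) :=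
  plnCDF_pareto_near_zero_general β μ τ hτ
end

section
/- If X = e^{μ + τ·G − E} where G ~ N(0,1) and E is exponential with rate β, independent, then X has the Pareto-Lognormal distribution with CDF F(x) = Φ((log x − μ)/τ) + x^β e^{−βμ+β²τ²/2} Φᶜ((log x − μ + βτ²)/τ). -/
open MeasureTheory Filter

/-! Conditionally on `G = g`, the event is `E ≥ τ (g - a)` with `a = (log x - μ) / τ`, which has
probability `exp (-βτ max (g - a) 0)`. Integrating against the standard Gaussian, the range
`g ≤ a` contributes `Φ a`; on `g > a` the exponential factor tilts the Gaussian,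
`e^{-kg} φ(g) = e^{k²/2} φ(g + k)` with `k = βτ`, which turns that range into
`x^β e^{-βμ + β²τ²/2} Φᶜ(a + βτ)`. -/

open Real Set ProbabilityTheory
open scoped NNReal

namespace ProbabilityTheory

lemma expMeasure_Ici {r : ℝ} (hr : 0 < r) (t : ℝ) :
    expMeasure r (Ici t) = ENNReal.ofReal (exp (-(r * max t 0))) := by
  have := isProbabilityMeasure_expMeasure hr
  have hnull : expMeasure r {t} = 0 :=
    withDensity_absolutelyContinuous _ _ (Real.volume_singleton (a := t))
  rw [← measure_congr (Ioi_ae_eq_Ici' hnull), ← compl_Iic, prob_compl_eq_one_sub measurableSet_Iic,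
    ← ofReal_cdf, cdf_expMeasure_eq hr, ← ENNReal.ofReal_one]
  split_ifs with ht
  · have hexp : exp (-(r * t)) ≤ 1 := exp_le_one_iff.mpr (by nlinarith)
    rw [max_eq_left ht, ← ENNReal.ofReal_sub _ (sub_nonneg.mpr hexp), sub_sub_cancel]
  · rw [max_eq_right (not_le.mp ht).le]
    simp

lemma prod_expMeasure_setOf_le {α : Type*} [MeasurableSpace α] {r : ℝ} (hr : 0 < r)
    (ν : Measure α) [SFinite ν] {f : α → ℝ} (hf : Measurable f) :
    (ν.prod (expMeasure r)) {p | f p.1 ≤ p.2} =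
      ∫⁻ a, ENNReal.ofReal (exp (-(r * max (f a) 0))) ∂ν := by
  have := isProbabilityMeasure_expMeasure hr
  rw [Measure.prod_apply (measurableSet_le (by fun_prop) measurable_snd)]
  exact lintegral_congr fun a ↦ expMeasure_Ici hr (f a)

lemma exp_mul_mul_gaussianPDFReal (m : ℝ) (v : ℝ≥0) (s x : ℝ) :
    exp (s * x) * gaussianPDFReal m v x =
      exp (s * m + v * s ^ 2 / 2) * gaussianPDFReal (m + v * s) v x := by
  rcases eq_or_ne v 0 with rfl | hv
  · simp
  have hv' : (v : ℝ) ≠ 0 := by exact_mod_cast hv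
  simp only [gaussianPDFReal]
  rw [mul_left_comm, ← exp_add, mul_left_comm, ← exp_add]
  congr 2
  field_simp
  ring

lemma setIntegral_exp_mul_gaussianReal (m : ℝ) {v : ℝ≥0} (hv : v ≠ 0) (s : ℝ) (A : Set ℝ) :
    ∫ x in A, exp (s * x) ∂gaussianReal m v =
      exp (s * m + v * s ^ 2 / 2) * (gaussianReal (m + v * s) v).real A := by
  rw [gaussianReal_of_var_ne_zero _ hv, setIntegral_withDensity_eq_setIntegral_toReal_smul' A
    (measurable_gaussianPDF m v) (ae_of_all _ fun _ ↦ gaussianPDF_lt_top)]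
  simp_rw [toReal_gaussianPDF, smul_eq_mul, mul_comm (gaussianPDFReal m v _),
    exp_mul_mul_gaussianPDFReal, integral_const_mul, measureReal_def,
    gaussianReal_apply_eq_integral _ hv,
    ENNReal.toReal_ofReal (integral_nonneg fun _ ↦ gaussianPDFReal_nonneg _ _ _)]

end ProbabilityTheory

lemma Phi_eq_measureReal_Iic (a : ℝ) : Phi a = (gaussianReal 0 1).real (Iic a) := by
  rw [measureReal_def, gaussianReal_apply_eq_integral _ one_ne_zero,
    ENNReal.toReal_ofReal (integral_nonneg fun _ ↦ gaussianPDFReal_nonneg _ _ _), Phi]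
  simp [gaussianPDFReal]

lemma PhiC_eq_measureReal_Ioi (a : ℝ) : PhiC a = (gaussianReal 0 1).real (Ioi a) := by
  rw [PhiC, Phi_eq_measureReal_Iic, ← compl_Iic, measureReal_compl measurableSet_Iic,
    probReal_univ]

lemma lintegral_exp_neg_mul_max_sub_gaussianReal (k a : ℝ) :
    ∫⁻ g, ENNReal.ofReal (exp (-(k * max (g - a) 0))) ∂gaussianReal 0 1 =
      ENNReal.ofReal (Phi a + exp (k * a + k ^ 2 / 2) * PhiC (a + k)) := by
  have hIic : ∫⁻ g in Iic a, ENNReal.ofReal (exp (-(k * max (g - a) 0))) ∂gaussianReal 0 1 =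
      ENNReal.ofReal (Phi a) := by
    rw [setLIntegral_congr_fun measurableSet_Iic (g := 1) fun g (hg : g ≤ a) ↦ by
        simp [max_eq_right (sub_nonpos.mpr hg)],
      Pi.one_def, setLIntegral_one, Phi_eq_measureReal_Iic, ofReal_measureReal]
  have hshift : (gaussianReal (-k) 1).real (Ioi a) = PhiC (a + k) := by
    rw [PhiC_eq_measureReal_Ioi, ← zero_add (-k), ← gaussianReal_map_add_const,
      map_measureReal_apply (by fun_prop) measurableSet_Ioi, preimage_add_const_Ioi, sub_neg_eq_add]
  have hIoi : ∫⁻ g in Ioi a, ENNReal.ofReal (exp (-(k * max (g - a) 0))) ∂gaussianReal 0 1 =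
      ENNReal.ofReal (exp (k * a + k ^ 2 / 2) * PhiC (a + k)) := by
    rw [setLIntegral_congr_fun measurableSet_Ioi
        (g := fun g ↦ ENNReal.ofReal (exp (k * a) * exp (-k * g))) fun g (hg : a < g) ↦ by
          dsimp only
          rw [max_eq_left (sub_nonneg.mpr hg.le), ← exp_add]
          congr 2
          ring,
      ← ofReal_integral_eq_lintegral_ofReal
        ((integrable_exp_mul_gaussianReal (-k)).const_mul _).integrableOn
        (ae_of_all _ fun _ ↦ by positivity),
      integral_const_mul, setIntegral_exp_mul_gaussianReal _ one_ne_zero]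
    simp only [NNReal.coe_one, one_mul, zero_add, mul_zero, neg_sq]
    rw [hshift, ← mul_assoc, ← exp_add]
  rw [← lintegral_add_compl _ measurableSet_Iic, compl_Iic, hIic, hIoi,
    ENNReal.ofReal_add (Phi_eq_measureReal_Iic a ▸ measureReal_nonneg)
      (mul_nonneg (exp_pos _).le (PhiC_eq_measureReal_Ioi _ ▸ measureReal_nonneg))]

theorem pln_generation (β μ τ : ℝ) (hβ : 0 < β) (hτ : 0 < τ) (x : ℝ) (hx : 0 < x) :
    ((ProbabilityTheory.gaussianReal 0 1).prod (ProbabilityTheory.expMeasure β))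
        {p : ℝ × ℝ | Real.exp (μ + τ * p.1 - p.2) ≤ x} =
      ENNReal.ofReal (plnCDF β μ τ x) := by
  set a := (log x - μ) / τ with ha
  have hset : {p : ℝ × ℝ | exp (μ + τ * p.1 - p.2) ≤ x} = {p | τ * (p.1 - a) ≤ p.2} := by
    ext p
    rw [mem_ofPred, mem_ofPred, ← le_log_iff_exp_le hx, mul_sub, ha, mul_div_cancel₀ _ hτ.ne']
    constructor <;> intro h <;> linarith
  have hmax (g : ℝ) : β * max (τ * (g - a)) 0 = β * τ * max (g - a) 0 := by
    rw [mul_assoc, mul_max_of_nonneg _ _ hτ.le, mul_zero]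
  rw [hset, prod_expMeasure_setOf_le hβ _ (f := fun g ↦ τ * (g - a)) (by fun_prop)]
  simp_rw [hmax, lintegral_exp_neg_mul_max_sub_gaussianReal, plnCDF]
  congr 3
  · rw [rpow_def_of_pos hx, ← exp_add, ha]
    congr 1
    field_simp
    ring
  · rw [ha]
    field_simp
end
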